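/- The ILM cocycle on the disk is bounded: |C_{η,x₀}(g,h)| ≤ π for all g, h ∈ H. -/

import Mathlib

open MeasureTheory

noncomputable section

/-- The closed unit disk in `ℝ²`. -/
def Disk : Set (ℝ × ℝ) := {p | p.1 ^ 2 + p.2 ^ 2 ≤ 1}

/-- The boundary circle `∂D` of the unit disk. -/
def Bdry : Set (ℝ × ℝ) := {p | p.1 ^ 2 + p.2 ^ 2 = 1}

/-- A symplectomorphism of the closed unit disk `D`: a bijection of `D` which, together
with its inverse, extends to a `C^∞` map on an open neighborhood of `D`, and whose
Jacobian determinant equals `1` at every point of `D`. -/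
structure SympD where
  toFun : ℝ × ℝ → ℝ × ℝ
  invFun : ℝ × ℝ → ℝ × ℝ
  mapsTo : Set.MapsTo toFun Disk Disk
  invMapsTo : Set.MapsTo invFun Disk Disk
  leftInv : ∀ p ∈ Disk, invFun (toFun p) = p
  rightInv : ∀ p ∈ Disk, toFun (invFun p) = p
  smooth : ∃ U : Set (ℝ × ℝ), IsOpen U ∧ Disk ⊆ U ∧ ContDiffOn ℝ (⊤ : ℕ∞) toFun U
  invSmooth : ∃ U : Set (ℝ × ℝ), IsOpen U ∧ Disk ⊆ U ∧ ContDiffOn ℝ (⊤ : ℕ∞) invFun U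
  areaPreserving : ∀ p ∈ Disk,
    (fderiv ℝ toFun p (1, 0)).1 * (fderiv ℝ toFun p (0, 1)).2
      - (fderiv ℝ toFun p (0, 1)).1 * (fderiv ℝ toFun p (1, 0)).2 = 1

/-- `g ∈ H_rel`: the restriction of `g` to the boundary circle is the identity. -/
def IsRel (g : SympD) : Prop := ∀ p ∈ Bdry, g.toFun p = p

/-- `g ∈ G`: `g` fixes the origin. -/
def FixesOrigin (g : SympD) : Prop := g.toFun (0, 0) = (0, 0)

/-- `g ∈ G_rel = G ∩ H_rel`. -/
def IsGrel (g : SympD) : Prop := FixesOrigin g ∧ IsRel g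

/-- `gh` coincides on `D` with the composite `g ∘ h`. -/
def IsComp (g h gh : SympD) : Prop := ∀ p ∈ Disk, gh.toFun p = g.toFun (h.toFun p)

/-- The 1-cochain `τ(g) = ∫_γ (g*η − η) = ∫₀¹ ½(g₁ ∂₁g₂ − g₂ ∂₁g₁)(t,0) dt`,
where `γ(t) = (t,0)` and `η = (x dy − y dx)/2` vanishes along `γ`. -/
def tau (g : SympD) : ℝ :=
  ∫ t in (0:ℝ)..1, (1 / 2) *
    ((g.toFun (t, 0)).1 * (fderiv ℝ g.toFun (t, 0) (1, 0)).2
      - (g.toFun (t, 0)).2 * (fderiv ℝ g.toFun (t, 0) (1, 0)).1)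

/-- `φ : ℝ → ℝ` is a lift of the boundary restriction `g|_{∂D}`. -/
def IsLift (g : SympD) (φ : ℝ → ℝ) : Prop :=
  ContDiff ℝ (⊤ : ℕ∞) φ ∧ (∀ θ : ℝ, φ (θ + 2 * Real.pi) = φ θ + 2 * Real.pi) ∧
    ∀ θ : ℝ, g.toFun (Real.cos θ, Real.sin θ) = (Real.cos (φ θ), Real.sin (φ θ))

/-- `F` is the primitive `F_g` of the closed 1-form `g*η − η` on `D`, normalized by
`F(x₀) = 0` at `x₀ = (1,0)`: it is `C^∞` on a neighborhood of `D` and satisfies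
`dF = g*η − η` at every point of `D`. -/
def IsPrimitive (g : SympD) (F : ℝ × ℝ → ℝ) : Prop :=
  (∃ U : Set (ℝ × ℝ), IsOpen U ∧ Disk ⊆ U ∧ ContDiffOn ℝ (⊤ : ℕ∞) F U) ∧
  (∀ p ∈ Disk, ∀ v : ℝ × ℝ,
    fderiv ℝ F p v =
      (1 / 2) * ((g.toFun p).1 * (fderiv ℝ g.toFun p v).2
        - (g.toFun p).2 * (fderiv ℝ g.toFun p v).1)
      - (1 / 2) * (p.1 * v.2 - p.2 * v.1)) ∧
  F (1, 0) = 0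

/-- `κ(g) = −∫_{∂D} F_g η = −½ ∫₀^{2π} F_g(cos θ, sin θ) dθ`, expressed in terms of a
chosen primitive `F = F_g`. -/
def kappaOf (F : ℝ × ℝ → ℝ) : ℝ :=
  -(1 / 2) * ∫ θ in (0:ℝ)..(2 * Real.pi), F (Real.cos θ, Real.sin θ)

/-- The 1-cochain `τ₀(g) = ∫_D g*η ∧ η
 = ∬_D ¼[(g₁ ∂ₓg₂ − g₂ ∂ₓg₁)x + (g₁ ∂_yg₂ − g₂ ∂_yg₁)y] dx dy`. -/
def tau0 (g : SympD) : ℝ :=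
  ∫ p in Disk, (1 / 4) *
    (((g.toFun p).1 * (fderiv ℝ g.toFun p (1, 0)).2
        - (g.toFun p).2 * (fderiv ℝ g.toFun p (1, 0)).1) * p.1
      + ((g.toFun p).1 * (fderiv ℝ g.toFun p (0, 1)).2
        - (g.toFun p).2 * (fderiv ℝ g.toFun p (0, 1)).1) * p.2)

section ILMaux
open Real Set

lemma ILM.bdry_subset_disk : Bdry ⊆ Disk := fun _ hp => le_of_eq hp

lemma ILM.circle_mem_bdry (t : ℝ) : (Real.cos t, Real.sin t) ∈ Bdry := by
  simp only [Bdry, Set.mem_setOf_eq]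
  exact Real.cos_sq_add_sin_sq t

lemma SympD.contDiffAt' (g : SympD) {p : ℝ × ℝ} (hp : p ∈ Disk) :
    ContDiffAt ℝ (⊤ : ℕ∞) g.toFun p := by
  obtain ⟨U, hUo, hUs, hU⟩ := g.smooth
  exact hU.contDiffAt (hUo.mem_nhds (hUs hp))

lemma SympD.diffAt (g : SympD) {p : ℝ × ℝ} (hp : p ∈ Disk) :
    DifferentiableAt ℝ g.toFun p :=
  (g.contDiffAt' hp).differentiableAt (by simp)

lemma SympD.invContDiffAt (g : SympD) {p : ℝ × ℝ} (hp : p ∈ Disk) :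
    ContDiffAt ℝ (⊤ : ℕ∞) g.invFun p := by
  obtain ⟨U, hUo, hUs, hU⟩ := g.invSmooth
  exact hU.contDiffAt (hUo.mem_nhds (hUs hp))

lemma ILM.openDisk_isOpen : IsOpen {p : ℝ × ℝ | p.1 ^ 2 + p.2 ^ 2 < 1} := by
  have : Continuous fun p : ℝ × ℝ => p.1 ^ 2 + p.2 ^ 2 := by fun_prop
  exact isOpen_lt this continuous_const

lemma ILM.disk_not_nhds {p : ℝ × ℝ} (hp : p ∈ Bdry) : Disk ∉ nhds p := by
  intro hmem
  have hp' : p.1 ^ 2 + p.2 ^ 2 = 1 := hp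
  obtain ⟨ε, hε, hball⟩ := Metric.mem_nhds_iff.1 hmem
  have hplen : ‖p‖ ≤ 1 := by
    have h1 : |p.1| ≤ 1 := by nlinarith [sq_abs p.1, sq_abs p.2, abs_nonneg p.1, abs_nonneg p.2, sq_nonneg (|p.1| - 1), sq_nonneg (|p.2| - 1)]
    have h2 : |p.2| ≤ 1 := by nlinarith [sq_abs p.1, sq_abs p.2, abs_nonneg p.1, abs_nonneg p.2, sq_nonneg (|p.1| - 1), sq_nonneg (|p.2| - 1)]
    simpa [Prod.norm_def, Real.norm_eq_abs] using max_le h1 h2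
  set δ := min (ε / 2) 1 with hδdef
  have hδpos : 0 < δ := lt_min (by linarith) one_pos
  have hδle : δ ≤ ε / 2 := min_le_left _ _
  have hmemball : (1 + δ) • p ∈ Metric.ball p ε := by
    rw [Metric.mem_ball]
    have hsub : (1 + δ) • p - p = δ • p := by rw [add_smul, one_smul]; abel
    rw [dist_eq_norm, hsub, norm_smul, Real.norm_eq_abs, abs_of_pos hδpos]
    nlinarith [norm_nonneg p]
  have hin : (1 + δ) • p ∈ Disk := hball hmemball
  have h2 : ((1 + δ) * p.1) ^ 2 + ((1 + δ) * p.2) ^ 2 ≤ 1 := hin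
  have h3 : (1 + δ) ^ 2 = ((1 + δ) * p.1) ^ 2 + ((1 + δ) * p.2) ^ 2 := by
    have : ((1 + δ) * p.1) ^ 2 + ((1 + δ) * p.2) ^ 2 = (1 + δ) ^ 2 * (p.1 ^ 2 + p.2 ^ 2) := by ring
    rw [this, hp']; ring
  nlinarith

/-- Boundary invariance: a `SympD` maps the boundary circle into itself. -/
lemma SympD.bdry_mapsTo (g : SympD) {p : ℝ × ℝ} (hp : p ∈ Bdry) : g.toFun p ∈ Bdry := by
  set w := g.toFun p with hw
  have hpD : p ∈ Disk := ILM.bdry_subset_disk hp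
  have hwD : w ∈ Disk := g.mapsTo hpD
  by_contra hnb
  have hwlt : w.1 ^ 2 + w.2 ^ 2 < 1 := lt_of_le_of_ne hwD hnb
  have hinvw : g.invFun w = p := g.leftInv p hpD
  have hdiffinv : DifferentiableAt ℝ g.invFun w := (g.invContDiffAt hwD).differentiableAt (by simp)
  have hdiffto : DifferentiableAt ℝ g.toFun p := g.diffAt hpD
  have heq : (fun x => g.toFun (g.invFun x)) =ᶠ[nhds w] id := by
    filter_upwards [ILM.openDisk_isOpen.mem_nhds hwlt] with x hx
    exact g.rightInv x (le_of_lt hx)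
  have hfcomp : fderiv ℝ (fun x => g.toFun (g.invFun x)) w = ContinuousLinearMap.id ℝ (ℝ × ℝ) := by
    rw [heq.fderiv_eq]; exact fderiv_id
  have hcomp : (fderiv ℝ g.toFun p).comp (fderiv ℝ g.invFun w) = ContinuousLinearMap.id ℝ (ℝ × ℝ) := by
    rw [← hfcomp]
    have := fderiv_comp w (hinvw ▸ hdiffto) hdiffinv
    rw [hinvw] at this
    exact this.symm
  have hlin : (fderiv ℝ g.toFun p).toLinearMap * (fderiv ℝ g.invFun w).toLinearMap = 1 := by
    apply LinearMap.ext; intro v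
    have := congrArg (fun (L : (ℝ × ℝ) →L[ℝ] (ℝ × ℝ)) => L v) hcomp
    simpa using this
  have hlin' : (fderiv ℝ g.invFun w).toLinearMap * (fderiv ℝ g.toFun p).toLinearMap = 1 :=
    mul_eq_one_comm.1 hlin
  have hcomp' : (fderiv ℝ g.invFun w).comp (fderiv ℝ g.toFun p) = ContinuousLinearMap.id ℝ (ℝ × ℝ) := by
    apply ContinuousLinearMap.ext; intro v
    have := congrArg (fun (L : (ℝ × ℝ) →ₗ[ℝ] (ℝ × ℝ)) => L v) hlin'
    simpa using this
  set e : (ℝ × ℝ) ≃L[ℝ] (ℝ × ℝ) :=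
    ContinuousLinearEquiv.equivOfInverse' (fderiv ℝ g.invFun w) (fderiv ℝ g.toFun p)
      hcomp' hcomp with he
  have hstrict : HasStrictFDerivAt g.invFun (e : (ℝ × ℝ) →L[ℝ] (ℝ × ℝ)) w :=
    (g.invContDiffAt hwD).hasStrictFDerivAt (by simp)
  have hmap : Filter.map g.invFun (nhds w) = nhds (g.invFun w) :=
    hstrict.map_nhds_eq_of_equiv
  have hmem : Disk ∈ Filter.map g.invFun (nhds w) := by
    rw [Filter.mem_map]
    filter_upwards [ILM.openDisk_isOpen.mem_nhds hwlt] with x hx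
    exact g.invMapsTo (le_of_lt hx)
  rw [hmap, hinvw] at hmem
  exact ILM.disk_not_nhds hp hmem

/-- coordinates of a CLM applied to a vector -/
lemma ILM.clm_coords (A : (ℝ × ℝ) →L[ℝ] (ℝ × ℝ)) (v : ℝ × ℝ) :
    A v = (v.1 * (A (1, 0)).1 + v.2 * (A (0, 1)).1,
           v.1 * (A (1, 0)).2 + v.2 * (A (0, 1)).2) := by
  have hv : v = v.1 • ((1 : ℝ), (0 : ℝ)) + v.2 • ((0 : ℝ), (1 : ℝ)) := by
    simp [Prod.ext_iff]
  conv_lhs => rw [hv]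
  rw [map_add, _root_.map_smul, _root_.map_smul]
  simp [Prod.ext_iff, Prod.smul_def, smul_eq_mul]

/-- determinant identity: the differential of a `SympD` preserves cross products. -/
lemma SympD.det_eq (g : SympD) {p : ℝ × ℝ} (hp : p ∈ Disk) (v w : ℝ × ℝ) :
    (fderiv ℝ g.toFun p v).1 * (fderiv ℝ g.toFun p w).2
      - (fderiv ℝ g.toFun p v).2 * (fderiv ℝ g.toFun p w).1
      = v.1 * w.2 - v.2 * w.1 := by
  have harea := g.areaPreserving p hp
  rw [ILM.clm_coords (fderiv ℝ g.toFun p) v, ILM.clm_coords (fderiv ℝ g.toFun p) w]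
  dsimp only
  linear_combination (v.1 * w.2 - v.2 * w.1) * harea

/-- the outward radial derivative inequality at the boundary -/
lemma SympD.radial_nonneg (g : SympD) {q : ℝ × ℝ} (hq : q ∈ Bdry) :
    0 ≤ (g.toFun q).1 * (fderiv ℝ g.toFun q q).1
        + (g.toFun q).2 * (fderiv ℝ g.toFun q q).2 := by
  have hq' : q.1 ^ 2 + q.2 ^ 2 = 1 := hq
  have hqD : q ∈ Disk := ILM.bdry_subset_disk hq
  set A := fderiv ℝ g.toFun q with hA
  set u := g.toFun q with hu
  set c : ℝ → ℝ × ℝ := fun s => (1 - s) • q with hc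
  have hc0 : c 0 = q := by simp [hc]
  have hcd : HasDerivAt c (-q) 0 := by
    have h1 : HasDerivAt (fun s : ℝ => 1 - s) (-1) 0 := by
      simpa using (hasDerivAt_id (0:ℝ)).const_sub 1
    simpa using h1.smul_const q
  have hgd : HasFDerivAt g.toFun A (c 0) := by rw [hc0]; exact (g.diffAt hqD).hasFDerivAt
  have hgc : HasDerivAt (fun s => g.toFun (c s)) (A (-q)) 0 := hgd.comp_hasDerivAt 0 hcd
  have h1 : HasDerivAt (fun s => (g.toFun (c s)).1) (A (-q)).1 0 :=
    ((ContinuousLinearMap.fst ℝ ℝ ℝ).hasFDerivAt).comp_hasDerivAt 0 hgc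
  have h2 : HasDerivAt (fun s => (g.toFun (c s)).2) (A (-q)).2 0 :=
    ((ContinuousLinearMap.snd ℝ ℝ ℝ).hasFDerivAt).comp_hasDerivAt 0 hgc
  set ψ : ℝ → ℝ := fun s => (g.toFun (c s)).1 ^ 2 + (g.toFun (c s)).2 ^ 2 with hψdef
  have hu1 : (g.toFun (c 0)).1 = u.1 := by rw [hc0]
  have hu2 : (g.toFun (c 0)).2 = u.2 := by rw [hc0]
  have hψ : HasDerivAt ψ (2 * u.1 * (A (-q)).1 + 2 * u.2 * (A (-q)).2) 0 := by
    have := (h1.fun_pow 2).fun_add (h2.fun_pow 2)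
    simpa [hu1, hu2, mul_comm, mul_assoc, mul_left_comm] using this
  have hψ0 : ψ 0 = 1 := by
    have : u ∈ Bdry := g.bdry_mapsTo hq
    simp only [hψdef, hc0]
    exact this
  have hψle : ∀ s ∈ Ioo (0:ℝ) 1, ψ s ≤ 1 := by
    intro s hs
    have hcs : c s ∈ Disk := by
      simp only [Disk, hc, Prod.smul_def, smul_eq_mul, Set.mem_setOf_eq]
      have : (1 - s) ^ 2 * (q.1 ^ 2 + q.2 ^ 2) ≤ 1 := by
        rw [hq']; nlinarith [hs.1, hs.2]
      nlinarith [this]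
    exact g.mapsTo hcs
  -- one-sided derivative bound
  have hψw : HasDerivWithinAt ψ (2 * u.1 * (A (-q)).1 + 2 * u.2 * (A (-q)).2) (Ici 0) 0 :=
    hψ.hasDerivWithinAt
  have hslope : Filter.Tendsto (slope ψ 0) (nhdsWithin 0 (Ioi 0))
      (nhds (2 * u.1 * (A (-q)).1 + 2 * u.2 * (A (-q)).2)) := by
    have := hasDerivWithinAt_iff_tendsto_slope.1 hψw
    rwa [Ici_sdiff_left] at this
  have hineq : 2 * u.1 * (A (-q)).1 + 2 * u.2 * (A (-q)).2 ≤ 0 := by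
    apply le_of_tendsto hslope
    filter_upwards [Ioo_mem_nhdsGT one_pos] with s hs
    rw [slope_def_field]
    apply div_nonpos_of_nonpos_of_nonneg
    · rw [hψ0]; linarith [hψle s hs]
    · linarith [hs.1]
  have hAneg : A (-q) = -(A q) := A.map_neg q
  rw [hAneg] at hineq
  simp only [Prod.fst_neg, Prod.snd_neg] at hineq
  linarith

lemma ILM.exists_angle {p : ℝ × ℝ} (hp : p ∈ Bdry) :
    ∃ θ : ℝ, 0 ≤ θ ∧ θ ≤ 2 * Real.pi ∧ p = (Real.cos θ, Real.sin θ) := by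
  have hp' : p.1 ^ 2 + p.2 ^ 2 = 1 := hp
  have hx1 : -1 ≤ p.1 := by nlinarith [sq_nonneg p.2, sq_nonneg (p.1 + 1)]
  have hx2 : p.1 ≤ 1 := by nlinarith [sq_nonneg p.2, sq_nonneg (p.1 - 1)]
  have hsq : Real.sqrt (1 - p.1 ^ 2) = |p.2| := by
    rw [show 1 - p.1 ^ 2 = p.2 ^ 2 by linarith, Real.sqrt_sq_eq_abs]
  rcases le_or_gt 0 p.2 with hy | hy
  · refine ⟨Real.arccos p.1, Real.arccos_nonneg _, ?_, ?_⟩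
    · have := Real.arccos_le_pi p.1
      linarith [Real.pi_pos]
    · rw [Prod.ext_iff]
      constructor
      · exact (Real.cos_arccos hx1 hx2).symm
      · rw [Real.sin_arccos, hsq, abs_of_nonneg hy]
  · refine ⟨2 * Real.pi - Real.arccos p.1, ?_, ?_, ?_⟩
    · have := Real.arccos_le_pi p.1
      linarith [Real.pi_pos]
    · linarith [Real.arccos_nonneg p.1]
    · rw [Prod.ext_iff]
      constructor
      · simp only
        rw [Real.cos_sub, Real.cos_two_pi, Real.sin_two_pi]
        simpa using (Real.cos_arccos hx1 hx2).symm
      · simp only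
        rw [Real.sin_sub, Real.cos_two_pi, Real.sin_two_pi]
        rw [Real.sin_arccos, hsq, abs_of_neg hy]
        ring

end ILMaux

section ILMmain
open Real Set

/-- the ILM cocycle on the disk is bounded: `|C_{η,x₀}(g,h)| ≤ π`. -/
theorem ILM_bounded (g h : SympD) (F : ℝ × ℝ → ℝ) (hF : IsPrimitive g F) :
    |F (h.toFun (1, 0))| ≤ Real.pi := by
  obtain ⟨⟨UF, hUFo, hUFs, hUF⟩, hdF, hF0⟩ := hF
  have hx0B : ((1:ℝ), (0:ℝ)) ∈ Bdry := by simp [Bdry]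
  have hpB : h.toFun (1, 0) ∈ Bdry := h.bdry_mapsTo hx0B
  obtain ⟨θ, hθ0, hθ2π, hθeq⟩ := ILM.exists_angle hpB
  -- the circle parametrization
  set q : ℝ → ℝ × ℝ := fun t => (Real.cos t, Real.sin t) with hqdef
  have hqB : ∀ t, q t ∈ Bdry := fun t => ILM.circle_mem_bdry t
  have hqD : ∀ t, q t ∈ Disk := fun t => ILM.bdry_subset_disk (hqB t)
  have hq' : ∀ t, HasDerivAt q (-Real.sin t, Real.cos t) t := fun t =>
    (Real.hasDerivAt_cos t).prodMk (Real.hasDerivAt_sin t)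
  -- u = g ∘ q and its derivative
  set u : ℝ → ℝ × ℝ := fun t => g.toFun (q t) with hudef
  set A : ℝ → (ℝ × ℝ) →L[ℝ] (ℝ × ℝ) := fun t => fderiv ℝ g.toFun (q t) with hAdef
  have hu' : ∀ t, HasDerivAt u (A t (-Real.sin t, Real.cos t)) t := fun t =>
    (g.diffAt (hqD t)).hasFDerivAt.comp_hasDerivAt t (hq' t)
  -- tangency: u ⟂ u'
  have htang : ∀ t, (u t).1 * (A t (-Real.sin t, Real.cos t)).1
      + (u t).2 * (A t (-Real.sin t, Real.cos t)).2 = 0 := by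
    intro t
    have h1 : ∀ s, (u s).1 ^ 2 + (u s).2 ^ 2 = 1 := fun s => g.bdry_mapsTo (hqB s)
    have hN : HasDerivAt (fun s => (u s).1 ^ 2 + (u s).2 ^ 2)
        (2 * (u t).1 * (A t (-Real.sin t, Real.cos t)).1
          + 2 * (u t).2 * (A t (-Real.sin t, Real.cos t)).2) t := by
      have hc1 : HasDerivAt (fun s => (u s).1) (A t (-Real.sin t, Real.cos t)).1 t :=
        ((ContinuousLinearMap.fst ℝ ℝ ℝ).hasFDerivAt).comp_hasDerivAt t (hu' t)
      have hc2 : HasDerivAt (fun s => (u s).2) (A t (-Real.sin t, Real.cos t)).2 t :=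
        ((ContinuousLinearMap.snd ℝ ℝ ℝ).hasFDerivAt).comp_hasDerivAt t (hu' t)
      have := (hc1.fun_pow 2).fun_add (hc2.fun_pow 2)
      simpa [mul_comm, mul_assoc, mul_left_comm] using this
    have hconst : HasDerivAt (fun s => (u s).1 ^ 2 + (u s).2 ^ 2) 0 t := by
      have : (fun s => (u s).1 ^ 2 + (u s).2 ^ 2) = fun _ => (1:ℝ) := funext h1
      rw [this]; exact hasDerivAt_const t 1
    have := hN.unique hconst
    linarith
  -- W ≥ 0
  set W : ℝ → ℝ := fun t => (u t).1 * (A t (-Real.sin t, Real.cos t)).2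
      - (u t).2 * (A t (-Real.sin t, Real.cos t)).1 with hWdef
  have hWnonneg : ∀ t, 0 ≤ W t := by
    intro t
    have hdet := g.det_eq (hqD t) (-Real.sin t, Real.cos t) (q t)
    have hr := g.radial_nonneg (hqB t)
    have hqt1 : (q t).1 = Real.cos t := rfl
    have hqt2 : (q t).2 = Real.sin t := rfl
    -- hdet : (Aτ).1 (Aq).2 − (Aτ).2 (Aq).1 = τ₁ q₂ − τ₂ q₁ = −1
    have hdet' : (A t (-Real.sin t, Real.cos t)).1 * (A t (q t)).2
        - (A t (-Real.sin t, Real.cos t)).2 * (A t (q t)).1 = -1 := by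
      rw [hdet, hqt1, hqt2]
      simp only
      nlinarith [Real.sin_sq_add_cos_sq t]
    have hnorm : (u t).1 ^ 2 + (u t).2 ^ 2 = 1 := g.bdry_mapsTo (hqB t)
    have htan := htang t
    -- abbreviations
    set u1 := (u t).1; set u2 := (u t).2
    set t1 := (A t (-Real.sin t, Real.cos t)).1; set t2 := (A t (-Real.sin t, Real.cos t)).2
    set n1 := (A t (q t)).1; set n2 := (A t (q t)).2
    have hr' : 0 ≤ u1 * n1 + u2 * n2 := hr
    have hWr : (u1 * t2 - u2 * t1) * (u1 * n1 + u2 * n2) = 1 := by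
      linear_combination (t2 * n1 - t1 * n2) * hnorm + (u1 * n2 - u2 * n1) * htan - hdet'
    have hWt : W t = u1 * t2 - u2 * t1 := rfl
    rw [hWt]
    clear_value u1 u2 t1 t2 n1 n2
    nlinarith [hWr, hr']
  -- G and Ĝ
  set G : ℝ → ℝ := fun t => F (q t) with hGdef
  have hFdiff : ∀ t, DifferentiableAt ℝ F (q t) := fun t =>
    (hUF.contDiffAt (hUFo.mem_nhds (hUFs (hqD t)))).differentiableAt (by simp)
  have hG' : ∀ t, HasDerivAt G (1 / 2 * W t - 1 / 2) t := by
    intro t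
    have hG : HasDerivAt G (fderiv ℝ F (q t) (-Real.sin t, Real.cos t)) t :=
      (hFdiff t).hasFDerivAt.comp_hasDerivAt t (hq' t)
    have heq := hdF (q t) (hqD t) (-Real.sin t, Real.cos t)
    have hqt1 : (q t).1 = Real.cos t := rfl
    have hqt2 : (q t).2 = Real.sin t := rfl
    rw [heq] at hG
    convert hG using 1
    rw [hqt1, hqt2, hWdef]
    simp only
    nlinarith [Real.sin_sq_add_cos_sq t]
  set Ghat : ℝ → ℝ := fun t => G t + t / 2 with hGhatdef
  have hGhat' : ∀ t, HasDerivAt Ghat (1 / 2 * W t) t := by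
    intro t
    have h2 : HasDerivAt (fun s : ℝ => s / 2) (1 / 2 : ℝ) t := by
      simpa using (hasDerivAt_id t).div_const 2
    have := (hG' t).fun_add h2
    exact this.congr_deriv (by ring)
  have hmono : Monotone Ghat := by
    apply monotone_of_deriv_nonneg
    · exact fun t => (hGhat' t).differentiableAt
    · intro t
      rw [(hGhat' t).deriv]
      exact mul_nonneg (by norm_num) (hWnonneg t)
  -- endpoint values
  have hq0 : q 0 = ((1:ℝ), (0:ℝ)) := by simp [hqdef]
  have hq2π : q (2 * Real.pi) = ((1:ℝ), (0:ℝ)) := by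
    simp [hqdef, Real.cos_two_pi, Real.sin_two_pi]
  have hGhat0 : Ghat 0 = 0 := by
    simp only [hGhatdef, hGdef, hq0, hF0]
    norm_num
  have hGhat2π : Ghat (2 * Real.pi) = Real.pi := by
    simp only [hGhatdef, hGdef, hq2π, hF0]
    ring
  have h1 : Ghat 0 ≤ Ghat θ := hmono hθ0
  have h2 : Ghat θ ≤ Ghat (2 * Real.pi) := hmono hθ2π
  rw [hGhat0] at h1
  rw [hGhat2π] at h2
  have hFp : F (h.toFun (1, 0)) = Ghat θ - θ / 2 := by
    rw [hGhatdef]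
    simp only [hGdef, hqdef]
    rw [← hθeq]
    ring
  rw [hFp]
  rw [abs_le]
  clear_value Ghat
  constructor
  · linarith [Real.pi_pos]
  · linarith

end ILMmain
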